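/- arXiv:2010.12165 — 3 statements merged into one kernel-verified Lean document; each statement's English description precedes it below -/
import Mathlib

section
/- If f : ℝ → ℝ is continuously differentiable on [-ρ,ρ], f(ρ) = 0 = f(-ρ), and f is nonconstant on [-ρ,ρ] (so that min f' < 0 on [-ρ,ρ]), then setting ω₀⁺ = -1/(min_{|ξ|≤ρ} f'(ξ)) > 0, for all ξ ∈ [-ρ,ρ] and all ω ∈ (0, ω₀⁺] we have |ξ + ω f(ξ)| ≤ ρ. -/
/-! By the mean value theorem, a lower bound `m` for `f'` on `[a, b]` gives
`m (x - a) ≤ f x ≤ -m (b - x)` when `f a = f b = 0`; so as long as `ω ≥ 0` and `ω m ≥ -1`, the point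
`x + ω f x` stays between `x - (x - a) = a` and `x + (b - x) = b`. With `m = min f'`, the bound
`m < 0` holds because a function vanishing at both ends with `f' ≥ 0` would be monotone, hence zero. -/

open scoped BigOperators Kronecker

attribute [local instance] Matrix.linftyOpNormedRing Matrix.linftyOpNormedAlgebra

/-- The matrix `∞`-norm: maximum absolute row sum (the operator norm induced by the
vector supremum norm). -/
noncomputable def rowSumNorm {n : Type*} [Fintype n] (A : Matrix n n ℝ) : ℝ :=
  ⨆ i, ∑ j, |A i j|

/-- The logarithmic `∞`-norm `μ_∞(A) = max_i (a_ii + ∑_{j≠i} |a_ij|)`. -/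
noncomputable def logNormInf {n : Type*} [Fintype n] [DecidableEq n] (A : Matrix n n ℝ) : ℝ :=
  ⨆ i, (A i i + ∑ j ∈ Finset.univ.erase i, |A i j|)

open Set

section

variable {f f' : ℝ → ℝ} {a b : ℝ}

theorem mul_sub_le_sub_of_hasDerivAt_of_le {m : ℝ}
    (hderiv : ∀ x ∈ Icc a b, HasDerivAt f (f' x) x) (hm : ∀ x ∈ Icc a b, m ≤ f' x)
    {x y : ℝ} (hx : x ∈ Icc a b) (hy : y ∈ Icc a b) (hxy : x ≤ y) :
    m * (y - x) ≤ f y - f x := by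
  have hderiv' : ∀ z ∈ interior (Icc a b), HasDerivAt f (f' z) z :=
    fun z hz => hderiv z (interior_subset hz)
  refine (convex_Icc a b).mul_sub_le_image_sub_of_le_deriv
    (fun z hz => (hderiv z hz).continuousAt.continuousWithinAt)
    (fun z hz => (hderiv' z hz).differentiableAt.differentiableWithinAt)
    (fun z hz => ?_) x hx y hy hxy
  rw [(hderiv' z hz).deriv]
  exact hm z (interior_subset hz)

theorem exists_hasDerivAt_neg_of_ne_zero (hderiv : ∀ x ∈ Icc a b, HasDerivAt f (f' x) x)
    (ha : f a = 0) (hb : f b = 0) {c : ℝ} (hc : c ∈ Icc a b) (hfc : f c ≠ 0) :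
    ∃ d ∈ Icc a b, f' d < 0 := by
  by_contra! hf'
  have hac := mul_sub_le_sub_of_hasDerivAt_of_le hderiv hf' (left_mem_Icc.2 (hc.1.trans hc.2))
    hc hc.1
  have hcb := mul_sub_le_sub_of_hasDerivAt_of_le hderiv hf' hc
    (right_mem_Icc.2 (hc.1.trans hc.2)) hc.2
  exact hfc (by linarith)

theorem add_mul_mem_Icc_of_le_hasDerivAt {m ω : ℝ}
    (hderiv : ∀ x ∈ Icc a b, HasDerivAt f (f' x) x) (hm : ∀ x ∈ Icc a b, m ≤ f' x)
    (ha : f a = 0) (hb : f b = 0) (hω : 0 ≤ ω) (hωm : -1 ≤ ω * m) {x : ℝ} (hx : x ∈ Icc a b) :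
    x + ω * f x ∈ Icc a b := by
  have hab : a ≤ b := hx.1.trans hx.2
  have hax := mul_sub_le_sub_of_hasDerivAt_of_le hderiv hm (left_mem_Icc.2 hab) hx hx.1
  have hxb := mul_sub_le_sub_of_hasDerivAt_of_le hderiv hm hx (right_mem_Icc.2 hab) hx.2
  rw [ha] at hax
  rw [hb] at hxb
  constructor
  · calc a = x - 1 * (x - a) := by ring
      _ ≤ x + ω * m * (x - a) := by nlinarith [hx.1]
      _ ≤ x + ω * f x := by nlinarith
  · calc x + ω * f x ≤ x - ω * m * (b - x) := by nlinarith
      _ ≤ x + 1 * (b - x) := by nlinarith [hx.2]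
      _ = b := by ring

end

theorem stmt_0_general (ρ : ℝ) (f f' : ℝ → ℝ)
    (hderiv : ∀ x ∈ Set.Icc (-ρ) ρ, HasDerivAt f (f' x) x)
    (hcont : ContinuousOn f' (Set.Icc (-ρ) ρ))
    (hfρ : f ρ = 0) (hfnρ : f (-ρ) = 0)
    (hnc : ∃ x ∈ Set.Icc (-ρ) ρ, ∃ y ∈ Set.Icc (-ρ) ρ, f x ≠ f y) :
    0 < -1 / sInf (f' '' Set.Icc (-ρ) ρ) ∧
    ∀ ξ ∈ Set.Icc (-ρ) ρ, ∀ ω : ℝ, 0 < ω → ω ≤ -1 / sInf (f' '' Set.Icc (-ρ) ρ) →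
      |ξ + ω * f ξ| ≤ ρ := by
  set m := sInf (f' '' Icc (-ρ) ρ)
  have hm : ∀ x ∈ Icc (-ρ) ρ, m ≤ f' x := fun x hx =>
    csInf_le (isCompact_Icc.image_of_continuousOn hcont).bddBelow (mem_image_of_mem f' hx)
  obtain ⟨c, hc, hfc⟩ : ∃ c ∈ Icc (-ρ) ρ, f c ≠ 0 := by
    obtain ⟨x, hx, y, hy, hxy⟩ := hnc
    by_contra! h
    exact hxy ((h x hx).trans (h y hy).symm)
  obtain ⟨d, hd, hf'd⟩ := exists_hasDerivAt_neg_of_ne_zero hderiv hfnρ hfρ hc hfc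
  have hm_neg : m < 0 := (hm d hd).trans_lt hf'd
  refine ⟨div_pos_of_neg_of_neg neg_one_lt_zero hm_neg, fun ξ hξ ω hω hωm => ?_⟩
  rw [le_div_iff_of_neg hm_neg] at hωm
  exact abs_le.2 (add_mul_mem_Icc_of_le_hasDerivAt hderiv hm hfnρ hfρ hω.le hωm hξ)

theorem stmt_0 (ρ : ℝ) (hρ : 0 < ρ) (f f' : ℝ → ℝ)
    (hderiv : ∀ x ∈ Set.Icc (-ρ) ρ, HasDerivAt f (f' x) x)
    (hcont : ContinuousOn f' (Set.Icc (-ρ) ρ))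
    (hfρ : f ρ = 0) (hfnρ : f (-ρ) = 0)
    (hnc : ∃ x ∈ Set.Icc (-ρ) ρ, ∃ y ∈ Set.Icc (-ρ) ρ, f x ≠ f y) :
    0 < -1 / sInf (f' '' Set.Icc (-ρ) ρ) ∧
    ∀ ξ ∈ Set.Icc (-ρ) ρ, ∀ ω : ℝ, 0 < ω → ω ≤ -1 / sInf (f' '' Set.Icc (-ρ) ρ) →
      |ξ + ω * f ξ| ≤ ρ :=
  stmt_0_general ρ f f' hderiv hcont hfρ hfnρ hnc
end

section
/- Suppose ‖e^{ωL}‖_∞ ≤ 1 for all ω > 0, and f : ℝ → ℝ satisfies |ξ + ω f(ξ)| ≤ ρ for all ξ ∈ [-ρ,ρ] and ω ∈ (0, ω₀⁺]. If ‖uⁿ‖_∞ ≤ ρ and 0 < τ ≤ ω₀⁺, then the first-order integrating factor step u^{n+1} = e^{τL}(uⁿ + τ f(uⁿ)) satisfies ‖u^{n+1}‖_∞ ≤ ρ. -/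
open scoped BigOperators Kronecker

attribute [local instance] Matrix.linftyOpNormedRing Matrix.linftyOpNormedAlgebra

section
attribute [local instance] Matrix.linftyOpNormedAddCommGroup

theorem Matrix.linfty_opNorm_eq_rowSumNorm {n : Type*} [Fintype n] (A : Matrix n n ℝ) :
    ‖A‖ = rowSumNorm A := by
  rw [Matrix.linfty_opNorm_def, Finset.sup_univ_eq_ciSup, NNReal.coe_iSup, rowSumNorm]
  simp only [NNReal.coe_sum, coe_nnnorm, Real.norm_eq_abs]
end

theorem norm_add_smul_comp_le {ι : Type*} [Fintype ι] (f : ℝ → ℝ) {ρ τ : ℝ}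
    (hf : ∀ ξ : ℝ, |ξ| ≤ ρ → |ξ + τ * f ξ| ≤ ρ) {u : ι → ℝ} (hu : ‖u‖ ≤ ρ) :
    ‖u + τ • fun i => f (u i)‖ ≤ ρ :=
  (pi_norm_le_iff_of_nonneg ((norm_nonneg u).trans hu)).2 fun i =>
    hf (u i) ((norm_le_pi_norm u i).trans hu)

theorem stmt_11_general {m : ℕ} (L : Matrix (Fin m) (Fin m) ℝ) (f : ℝ → ℝ)
    (ρ ω₀ τ : ℝ)
    (hL : ∀ ω : ℝ, 0 < ω → rowSumNorm (NormedSpace.exp (ω • L)) ≤ 1)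
    (hf : ∀ ξ : ℝ, |ξ| ≤ ρ → ∀ ω : ℝ, 0 < ω → ω ≤ ω₀ → |ξ + ω * f ξ| ≤ ρ)
    (u : Fin m → ℝ) (hu : ‖u‖ ≤ ρ) (hτ0 : 0 < τ) (hτ : τ ≤ ω₀) :
    ‖(NormedSpace.exp (τ • L)).mulVec (u + τ • fun i => f (u i))‖ ≤ ρ := by
  have hexp : ‖NormedSpace.exp (τ • L)‖ ≤ 1 :=
    (Matrix.linfty_opNorm_eq_rowSumNorm _).trans_le (hL τ hτ0)
  have hstep : ‖u + τ • fun i => f (u i)‖ ≤ ρ :=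
    norm_add_smul_comp_le f (fun ξ hξ => hf ξ hξ τ hτ0 hτ) hu
  calc ‖(NormedSpace.exp (τ • L)).mulVec (u + τ • fun i => f (u i))‖
      ≤ ‖NormedSpace.exp (τ • L)‖ * ‖u + τ • fun i => f (u i)‖ := Matrix.linfty_opNorm_mulVec _ _
    _ ≤ ρ := (mul_le_of_le_one_left (norm_nonneg _) hexp).trans hstep

theorem stmt_11 {m : ℕ} (L : Matrix (Fin m) (Fin m) ℝ) (f : ℝ → ℝ)
    (ρ ω₀ τ : ℝ) (hρ : 0 < ρ) (hω₀ : 0 < ω₀)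
    (hL : ∀ ω : ℝ, 0 < ω → rowSumNorm (NormedSpace.exp (ω • L)) ≤ 1)
    (hf : ∀ ξ : ℝ, |ξ| ≤ ρ → ∀ ω : ℝ, 0 < ω → ω ≤ ω₀ → |ξ + ω * f ξ| ≤ ρ)
    (u : Fin m → ℝ) (hu : ‖u‖ ≤ ρ) (hτ0 : 0 < τ) (hτ : τ ≤ ω₀) :
    ‖(NormedSpace.exp (τ • L)).mulVec (u + τ • fun i => f (u i))‖ ≤ ρ :=
  stmt_11_general L f ρ ω₀ τ hL hf u hu hτ0 hτ
end

section
/- Suppose ‖e^{ωL}‖_∞ ≤ 1 for all ω > 0, and f satisfies |ξ + ω f(ξ)| ≤ ρ for all ξ ∈ [-ρ,ρ], ω ∈ (0, ω₀⁺]. If ‖uⁿ‖_∞ ≤ ρ and 0 < τ ≤ (3/4)ω₀⁺, then all stages of the third-order IFRK scheme u⁽¹⁾ = (1/2)e^{(2τ/3)L}uⁿ + (1/2)e^{(2τ/3)L}(uⁿ + (4τ/3)f(uⁿ)), u⁽²⁾ = (2/3)e^{(2τ/3)L}uⁿ + (1/3)(u⁽¹⁾ + (4τ/3)f(u⁽¹⁾)),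 u^{n+1} = (59/128)e^{τL}uⁿ + (15/128)e^{τL}(uⁿ + (4τ/3)f(uⁿ)) + (27/64)e^{(τ/3)L}(u⁽²⁾ + (4τ/3)f(u⁽²⁾)) satisfy ‖u⁽¹⁾‖_∞, ‖u⁽²⁾‖_∞, ‖u^{n+1}‖_∞ ≤ ρ. -/
open scoped BigOperators Kronecker

attribute [local instance] Matrix.linftyOpNormedRing Matrix.linftyOpNormedAlgebra

/-! Each stage is a convex combination of vectors `e^{ωL} v` and forward Euler steps
`v + (4τ/3) f(v)`, where `v` is `uⁿ`, an earlier stage, or an Euler step of one. Since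
`‖e^{ωL}‖_∞ ≤ 1` and `4τ/3 ≤ ω₀⁺`, both operations map the ball `‖v‖_∞ ≤ ρ` into itself (the Euler
step componentwise, by the hypothesis on `f`), and the ball is convex. -/

open Metric
open scoped Matrix

theorem rowSumNorm_eq_linfty_opNorm {n : Type*} [Fintype n] [DecidableEq n] (A : Matrix n n ℝ) :
    rowSumNorm A = ‖A‖ := by
  rw [Matrix.linfty_opNorm_def, Finset.sup_univ_eq_ciSup, NNReal.coe_iSup]
  simp [rowSumNorm, Real.norm_eq_abs]

theorem mulVec_mem_closedBall_zero {n : Type*} [Fintype n] [DecidableEq n] {A : Matrix n n ℝ}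
    (hA : rowSumNorm A ≤ 1) {ρ : ℝ} {v : n → ℝ} (hv : v ∈ closedBall 0 ρ) :
    A *ᵥ v ∈ closedBall 0 ρ := by
  rw [mem_closedBall_zero_iff] at hv ⊢
  calc ‖A *ᵥ v‖ ≤ ‖A‖ * ‖v‖ := Matrix.linfty_opNorm_mulVec A v
    _ ≤ 1 * ρ := by
      gcongr
      exact (rowSumNorm_eq_linfty_opNorm A).symm ▸ hA
    _ = ρ := one_mul ρ

theorem eulerStep_mem_closedBall_zero {ι : Type*} [Fintype ι] {f : ℝ → ℝ} {ρ ω : ℝ}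
    (hf : ∀ ξ : ℝ, |ξ| ≤ ρ → |ξ + ω * f ξ| ≤ ρ) {v : ι → ℝ} (hv : v ∈ closedBall 0 ρ) :
    (v + ω • fun i => f (v i)) ∈ closedBall 0 ρ := by
  rw [mem_closedBall_zero_iff] at hv ⊢
  refine (pi_norm_le_iff_of_nonneg ((norm_nonneg v).trans hv)).2 fun i => ?_
  exact hf (v i) ((norm_le_pi_norm v i).trans hv)

theorem Convex.smul_add_smul_add_smul_mem {𝕜 E : Type*} [Field 𝕜] [LinearOrder 𝕜]
    [IsStrictOrderedRing 𝕜] [AddCommGroup E] [Module 𝕜 E] {s : Set E} (hs : Convex 𝕜 s)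
    {x y z : E} (hx : x ∈ s) (hy : y ∈ s) (hz : z ∈ s) {a b c : 𝕜} (ha : 0 ≤ a) (hb : 0 ≤ b)
    (hc : 0 ≤ c) (habc : a + b + c = 1) : a • x + b • y + c • z ∈ s := by
  have := hs.sum_mem (t := Finset.univ) (w := ![a, b, c]) (z := ![x, y, z])
    (by simp [Fin.forall_fin_succ, ha, hb, hc]) (by simp [Fin.sum_univ_three, habc])
    (by simp [Fin.forall_fin_succ, hx, hy, hz])
  simpa [Fin.sum_univ_three] using this

theorem stmt_13_general {m : ℕ} (L : Matrix (Fin m) (Fin m) ℝ) (f : ℝ → ℝ)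
    (ρ ω₀ τ : ℝ)
    (hL : ∀ ω : ℝ, 0 < ω → rowSumNorm (NormedSpace.exp (ω • L)) ≤ 1)
    (hf : ∀ ξ : ℝ, |ξ| ≤ ρ → ∀ ω : ℝ, 0 < ω → ω ≤ ω₀ → |ξ + ω * f ξ| ≤ ρ)
    (u u1 u2 u' : Fin m → ℝ) (hu : ‖u‖ ≤ ρ) (hτ0 : 0 < τ) (hτ : τ ≤ 3 / 4 * ω₀)
    (hu1 : u1 = (1 / 2 : ℝ) • (NormedSpace.exp ((2 * τ / 3) • L)).mulVec u
        + (1 / 2 : ℝ) • (NormedSpace.exp ((2 * τ / 3) • L)).mulVec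
            (u + (4 * τ / 3) • fun i => f (u i)))
    (hu2 : u2 = (2 / 3 : ℝ) • (NormedSpace.exp ((2 * τ / 3) • L)).mulVec u
        + (1 / 3 : ℝ) • (u1 + (4 * τ / 3) • fun i => f (u1 i)))
    (hu' : u' = (59 / 128 : ℝ) • (NormedSpace.exp (τ • L)).mulVec u
        + (15 / 128 : ℝ) • (NormedSpace.exp (τ • L)).mulVec
            (u + (4 * τ / 3) • fun i => f (u i))
        + (27 / 64 : ℝ) • (NormedSpace.exp ((τ / 3) • L)).mulVec
            (u2 + (4 * τ / 3) • fun i => f (u2 i))) :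
    ‖u1‖ ≤ ρ ∧ ‖u2‖ ≤ ρ ∧ ‖u'‖ ≤ ρ := by
  set B := closedBall (0 : Fin m → ℝ) ρ
  have hB : Convex ℝ B := convex_closedBall 0 ρ
  have hexp : ∀ ω : ℝ, 0 < ω → ∀ v ∈ B, (NormedSpace.exp (ω • L)).mulVec v ∈ B :=
    fun ω hω _ hv => mulVec_mem_closedBall_zero (hL ω hω) hv
  have heuler : ∀ v ∈ B, (v + (4 * τ / 3) • fun i => f (v i)) ∈ B :=
    fun _ hv => eulerStep_mem_closedBall_zero
      (fun ξ hξ => hf ξ hξ _ (by positivity) (by linarith)) hv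
  have h0 : u ∈ B := mem_closedBall_zero_iff.2 hu
  have h1 : u1 ∈ B := hu1 ▸ hB (hexp _ (by positivity) u h0)
    (hexp _ (by positivity) _ (heuler u h0)) (by norm_num) (by norm_num) (by norm_num)
  have h2 : u2 ∈ B := hu2 ▸ hB (hexp _ (by positivity) u h0) (heuler u1 h1)
    (by norm_num) (by norm_num) (by norm_num)
  have h3 : u' ∈ B := hu' ▸ hB.smul_add_smul_add_smul_mem (hexp τ hτ0 u h0)
    (hexp τ hτ0 _ (heuler u h0)) (hexp _ (by positivity) _ (heuler u2 h2))
    (by norm_num) (by norm_num) (by norm_num) (by norm_num)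
  simp only [B, mem_closedBall_zero_iff] at h1 h2 h3
  exact ⟨h1, h2, h3⟩

theorem stmt_13 {m : ℕ} (L : Matrix (Fin m) (Fin m) ℝ) (f : ℝ → ℝ)
    (ρ ω₀ τ : ℝ) (hρ : 0 < ρ) (hω₀ : 0 < ω₀)
    (hL : ∀ ω : ℝ, 0 < ω → rowSumNorm (NormedSpace.exp (ω • L)) ≤ 1)
    (hf : ∀ ξ : ℝ, |ξ| ≤ ρ → ∀ ω : ℝ, 0 < ω → ω ≤ ω₀ → |ξ + ω * f ξ| ≤ ρ)
    (u u1 u2 u' : Fin m → ℝ) (hu : ‖u‖ ≤ ρ) (hτ0 : 0 < τ) (hτ : τ ≤ 3 / 4 * ω₀)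
    (hu1 : u1 = (1 / 2 : ℝ) • (NormedSpace.exp ((2 * τ / 3) • L)).mulVec u
        + (1 / 2 : ℝ) • (NormedSpace.exp ((2 * τ / 3) • L)).mulVec
            (u + (4 * τ / 3) • fun i => f (u i)))
    (hu2 : u2 = (2 / 3 : ℝ) • (NormedSpace.exp ((2 * τ / 3) • L)).mulVec u
        + (1 / 3 : ℝ) • (u1 + (4 * τ / 3) • fun i => f (u1 i)))
    (hu' : u' = (59 / 128 : ℝ) • (NormedSpace.exp (τ • L)).mulVec u
        + (15 / 128 : ℝ) • (NormedSpace.exp (τ • L)).mulVec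
            (u + (4 * τ / 3) • fun i => f (u i))
        + (27 / 64 : ℝ) • (NormedSpace.exp ((τ / 3) • L)).mulVec
            (u2 + (4 * τ / 3) • fun i => f (u2 i))) :
    ‖u1‖ ≤ ρ ∧ ‖u2‖ ≤ ρ ∧ ‖u'‖ ≤ ρ :=
  stmt_13_general L f ρ ω₀ τ hL hf u u1 u2 u' hu hτ0 hτ hu1 hu2 hu'
end
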